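/- arXiv:2501.17618 — 2 statements merged into one kernel-verified Lean document; each statement's English description precedes it below -/
import Mathlib

section
/- (Joint connectivity–winding probability factorizes.) Let Pr(σ, w) = exp(−βE^{σ,w}) / ( ∑_{σ'} ∑_{w'} exp(−βE^{σ',w'}) ) be the Boltzmann distribution over permutations σ of Fin N and winding assignments w : Fin N → Fin P → Λ. Then for every ℓ, ℓ' ∈ Fin N and w₀ ∈ Λ, Pr(σ(ℓ) = ℓ' and w_ℓ^P = w₀) = Pr(σ(ℓ) = ℓ') · μ(r_ℓ^P, r_{ℓ'}^1, w₀) / ( ∑_{w'∈Λ} μ(r_ℓ^P, r_{ℓ'}^1, w') ), where Pr(σ(ℓ)=ℓ') and Pr(σ(ℓ)=ℓ' and w_ℓ^P=w₀) denote the total Boltzmann probabilities of the corresponding events. -/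
open Finset Real

noncomputable section

/-- Winding window: integer vectors `w : Fin d → ℤ` with `-W ≤ w i ≤ W` in every coordinate. -/
def windowSet (d W : ℕ) : Finset (Fin d → ℤ) :=
  Fintype.piFinset fun _ => Finset.Icc (-(W : ℤ)) (W : ℤ)

/-- The set of all winding assignments `w : Fin N → Fin P → Λ`. -/
def WAll (N P d W : ℕ) : Finset (Fin N → Fin P → Fin d → ℤ) :=
  Fintype.piFinset fun _ => Fintype.piFinset fun _ => windowSet d W

/-- Gaussian spring weight `μ(x, y, w) = exp(-βc ∑ᵢ (xᵢ + wᵢ L - yᵢ)²)`. -/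
def mu (d : ℕ) (β c L : ℝ) (x y : Fin d → ℝ) (w : Fin d → ℤ) : ℝ :=
  Real.exp (-(β * c * ∑ i, (x i + (w i : ℝ) * L - y i) ^ 2))

/-- The last bead (bead `P`, zero-indexed `P-1`). -/
def lastIdx (P : ℕ) [NeZero P] : Fin P :=
  ⟨P - 1, Nat.sub_lt (Nat.pos_of_ne_zero (NeZero.ne P)) Nat.one_pos⟩

/-- Configuration spring energy `E^{σ,w}`: the bead after the last bead of particle `ℓ`
is the first bead of particle `σ(ℓ)`. -/
def Eperm (N P d : ℕ) [NeZero P] (c L : ℝ) (r : Fin N → Fin P → Fin d → ℝ)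
    (σ : Equiv.Perm (Fin N)) (w : Fin N → Fin P → Fin d → ℤ) : ℝ :=
  c * ∑ ℓ : Fin N, ∑ j : Fin P, ∑ i : Fin d,
    (r ℓ j i + (w ℓ j i : ℝ) * L -
      (if h : j.val + 1 < P then r ℓ ⟨j.val + 1, h⟩ i else r (σ ℓ) 0 i)) ^ 2

/-- Normalization `∑_σ ∑_w exp(-βE^{σ,w})` of the Boltzmann distribution over
configurations. -/
def Zconf (N P d W : ℕ) [NeZero P] (β c L : ℝ) (r : Fin N → Fin P → Fin d → ℝ) : ℝ :=
  ∑ σ : Equiv.Perm (Fin N), ∑ w ∈ WAll N P d W, Real.exp (-(β * Eperm N P d c L r σ w))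

-- updW
def updW {N P d : ℕ} [NeZero P] (ℓ : Fin N) (w : Fin N → Fin P → Fin d → ℤ)
    (v : Fin d → ℤ) : Fin N → Fin P → Fin d → ℤ :=
  Function.update w ℓ (Function.update (w ℓ) (lastIdx P) v)

lemma last_no_succ (P : ℕ) [NeZero P] : ¬ ((lastIdx P).val + 1 < P) := by
  simp [lastIdx, Nat.sub_add_cancel (Nat.one_le_iff_ne_zero.mpr (NeZero.ne P))]

lemma updW_apply_last {N P d : ℕ} [NeZero P] (ℓ : Fin N) (w : Fin N → Fin P → Fin d → ℤ)
    (v : Fin d → ℤ) : updW ℓ w v ℓ (lastIdx P) = v := by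
  simp [updW]

lemma updW_updW {N P d : ℕ} [NeZero P] (ℓ : Fin N) (w : Fin N → Fin P → Fin d → ℤ)
    (v : Fin d → ℤ) : updW ℓ (updW ℓ w v) (w ℓ (lastIdx P)) = w := by
  funext a
  rcases eq_or_ne a ℓ with rfl | h
  · simp [updW, Function.update_idem]
  · simp [updW, Function.update_of_ne h]

lemma updW_mem {N P d W : ℕ} [NeZero P] (ℓ : Fin N) {w : Fin N → Fin P → Fin d → ℤ}
    {v : Fin d → ℤ} (hw : w ∈ WAll N P d W) (hv : v ∈ windowSet d W) :
    updW ℓ w v ∈ WAll N P d W := by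
  simp only [WAll, Fintype.mem_piFinset] at hw ⊢
  intro a b
  rcases eq_or_ne a ℓ with rfl | h
  · rcases eq_or_ne b (lastIdx P) with rfl | hb
    · simpa [updW] using hv
    · simpa [updW, Function.update_of_ne hb] using hw a b
  · simpa [updW, Function.update_of_ne h] using hw a b

lemma energy_split (N P d : ℕ) [NeZero P] (c L : ℝ) (r : Fin N → Fin P → Fin d → ℝ)
    (σ : Equiv.Perm (Fin N)) (ℓ ℓ' : Fin N) (hσ : σ ℓ = ℓ')
    (w : Fin N → Fin P → Fin d → ℤ) (v : Fin d → ℤ) :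
    Eperm N P d c L r σ (updW ℓ w v)
      + c * ∑ i, (r ℓ (lastIdx P) i + (w ℓ (lastIdx P) i : ℝ) * L - r ℓ' 0 i) ^ 2
    = Eperm N P d c L r σ w
      + c * ∑ i, (r ℓ (lastIdx P) i + (v i : ℝ) * L - r ℓ' 0 i) ^ 2 := by
  have hne := last_no_succ P
  unfold Eperm
  have main :
      (∑ a : Fin N, ((∑ j : Fin P, ∑ i : Fin d,
          (r a j i + (updW ℓ w v a j i : ℝ) * L -
            (if h : j.val + 1 < P then r a ⟨j.val + 1, h⟩ i else r (σ a) 0 i)) ^ 2)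
        - (∑ j : Fin P, ∑ i : Fin d,
          (r a j i + (w a j i : ℝ) * L -
            (if h : j.val + 1 < P then r a ⟨j.val + 1, h⟩ i else r (σ a) 0 i)) ^ 2)))
      = (∑ i, (r ℓ (lastIdx P) i + (v i : ℝ) * L - r ℓ' 0 i) ^ 2)
        - (∑ i, (r ℓ (lastIdx P) i + (w ℓ (lastIdx P) i : ℝ) * L - r ℓ' 0 i) ^ 2) := by
    rw [Finset.sum_eq_single ℓ]
    · have hup : updW ℓ w v ℓ = Function.update (w ℓ) (lastIdx P) v := by
        simp [updW]
      rw [hup, ← Finset.sum_sub_distrib, Finset.sum_eq_single (lastIdx P)]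
      · simp only [Function.update_self, dif_neg hne, hσ, Finset.sum_sub_distrib]
      · intro b _ hb
        rw [Function.update_of_ne hb, sub_self]
      · intro h; exact absurd (Finset.mem_univ _) h
    · intro a _ ha
      rw [show updW ℓ w v a = w a from Function.update_of_ne ha _ _, sub_self]
    · intro h; exact absurd (Finset.mem_univ _) h
  rw [Finset.sum_sub_distrib] at main
  linear_combination c * main

lemma exp_split (N P d : ℕ) [NeZero P] (β c L : ℝ) (r : Fin N → Fin P → Fin d → ℝ)
    (σ : Equiv.Perm (Fin N)) (ℓ ℓ' : Fin N) (hσ : σ ℓ = ℓ')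
    (w : Fin N → Fin P → Fin d → ℤ) (v : Fin d → ℤ) :
    Real.exp (-(β * Eperm N P d c L r σ (updW ℓ w v))) *
        mu d β c L (r ℓ (lastIdx P)) (r ℓ' 0) (w ℓ (lastIdx P))
      = Real.exp (-(β * Eperm N P d c L r σ w)) *
        mu d β c L (r ℓ (lastIdx P)) (r ℓ' 0) v := by
  unfold mu
  rw [← Real.exp_add, ← Real.exp_add]
  congr 1
  linear_combination (-β) * energy_split N P d c L r σ ℓ ℓ' hσ w v

lemma fiber_factor (N P d W : ℕ) [NeZero P] (β c L : ℝ) (r : Fin N → Fin P → Fin d → ℝ)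
    (σ : Equiv.Perm (Fin N)) (ℓ ℓ' : Fin N) (hσ : σ ℓ = ℓ')
    (w₀ : Fin d → ℤ) (hw₀ : w₀ ∈ windowSet d W) :
    (∑ w ∈ (WAll N P d W).filter (fun w => w ℓ (lastIdx P) = w₀),
        Real.exp (-(β * Eperm N P d c L r σ w))) *
      (∑ v ∈ windowSet d W, mu d β c L (r ℓ (lastIdx P)) (r ℓ' 0) v)
    = (∑ w ∈ WAll N P d W, Real.exp (-(β * Eperm N P d c L r σ w))) *
      mu d β c L (r ℓ (lastIdx P)) (r ℓ' 0) w₀ := by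
  classical
  have hmaps : ∀ w ∈ WAll N P d W, w ℓ (lastIdx P) ∈ windowSet d W := by
    intro w hw
    simp only [WAll, Fintype.mem_piFinset] at hw
    exact hw ℓ (lastIdx P)
  rw [← Finset.sum_fiberwise_of_maps_to hmaps
      (fun w => Real.exp (-(β * Eperm N P d c L r σ w)))]
  rw [Finset.mul_sum, Finset.sum_mul]
  refine Finset.sum_congr rfl fun v hv => ?_
  rw [Finset.sum_mul, Finset.sum_mul]
  refine Finset.sum_bij' (fun w _ => updW ℓ w v) (fun w _ => updW ℓ w w₀) ?_ ?_ ?_ ?_ ?_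
  · intro w hw
    rcases Finset.mem_filter.mp hw with ⟨hw1, hw2⟩
    exact Finset.mem_filter.mpr ⟨updW_mem ℓ hw1 hv, updW_apply_last ℓ w v⟩
  · intro w hw
    rcases Finset.mem_filter.mp hw with ⟨hw1, hw2⟩
    exact Finset.mem_filter.mpr ⟨updW_mem ℓ hw1 hw₀, updW_apply_last ℓ w w₀⟩
  · intro w hw
    rcases Finset.mem_filter.mp hw with ⟨hw1, hw2⟩
    have h := updW_updW ℓ w v
    rwa [hw2] at h
  · intro w hw
    rcases Finset.mem_filter.mp hw with ⟨hw1, hw2⟩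
    have h := updW_updW ℓ w w₀
    rwa [hw2] at h
  · intro w hw
    rcases Finset.mem_filter.mp hw with ⟨hw1, hw2⟩
    have := exp_split N P d β c L r σ ℓ ℓ' hσ w v
    rw [hw2] at this
    exact this.symm

/-- the joint connectivity–winding probability factorizes as the
connectivity probability times the single-spring Gaussian winding probability. -/
theorem stmt11 (N P d W : ℕ) [NeZero N] [NeZero P] (hd : 0 < d)
    (β L c : ℝ) (hβ : 0 < β) (hL : 0 < L) (hc : 0 < c)
    (r : Fin N → Fin P → Fin d → ℝ) (ℓ ℓ' : Fin N)
    (w₀ : Fin d → ℤ) (hw₀ : w₀ ∈ windowSet d W) :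
    (∑ σ ∈ Finset.univ.filter (fun σ : Equiv.Perm (Fin N) => σ ℓ = ℓ'),
        ∑ w ∈ (WAll N P d W).filter (fun w => w ℓ (lastIdx P) = w₀),
          Real.exp (-(β * Eperm N P d c L r σ w)) / Zconf N P d W β c L r)
      = (∑ σ ∈ Finset.univ.filter (fun σ : Equiv.Perm (Fin N) => σ ℓ = ℓ'),
          ∑ w ∈ WAll N P d W,
            Real.exp (-(β * Eperm N P d c L r σ w)) / Zconf N P d W β c L r) *
        (mu d β c L (r ℓ (lastIdx P)) (r ℓ' 0) w₀ /
          ∑ w' ∈ windowSet d W, mu d β c L (r ℓ (lastIdx P)) (r ℓ' 0) w') := by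
  classical
  have hMpos : 0 < ∑ w' ∈ windowSet d W, mu d β c L (r ℓ (lastIdx P)) (r ℓ' 0) w' := by
    refine Finset.sum_pos (fun x _ => Real.exp_pos _) ?_
    exact ⟨0, by simp [windowSet, Fintype.mem_piFinset]⟩
  have hsum :
      (∑ σ ∈ Finset.univ.filter (fun σ : Equiv.Perm (Fin N) => σ ℓ = ℓ'),
          ∑ w ∈ (WAll N P d W).filter (fun w => w ℓ (lastIdx P) = w₀),
            Real.exp (-(β * Eperm N P d c L r σ w))) *
        (∑ w' ∈ windowSet d W, mu d β c L (r ℓ (lastIdx P)) (r ℓ' 0) w')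
      = (∑ σ ∈ Finset.univ.filter (fun σ : Equiv.Perm (Fin N) => σ ℓ = ℓ'),
          ∑ w ∈ WAll N P d W, Real.exp (-(β * Eperm N P d c L r σ w))) *
        mu d β c L (r ℓ (lastIdx P)) (r ℓ' 0) w₀ := by
    rw [Finset.sum_mul, Finset.sum_mul]
    refine Finset.sum_congr rfl fun σ hσ => ?_
    exact fiber_factor N P d W β c L r σ ℓ ℓ' (Finset.mem_filter.mp hσ).2 w₀ hw₀
  simp only [← Finset.sum_div]
  rw [div_mul_div_comm, ← hsum, mul_div_mul_right _ _ hMpos.ne']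

end
end

section
/- (Grouped force on the last bead of a particle in bosonic PIMD with PBC.) With Z(r) = (1/N!)·∑_{σ} ∑_{w} exp(−βE^{σ,w}(r)) and V = −(1/β)·log Z, and with Pr denoting probabilities of events under the Boltzmann distribution Pr(σ,w) = exp(−βE^{σ,w})/(N!·Z), for every particle ℓ and coordinate i: −∂V/∂(r_ℓ^P)_i = ∑_{w∈Λ} Pr(w_ℓ^{P−1} = w) · (−2c)·(r_ℓ^P − r_ℓ^{P−1} − w·L)_i + ∑_{ℓ'=1}^{N} ∑_{w∈Λ} Pr(σ(ℓ) = ℓ' and w_ℓ^P = w) · (−2c)·(r_ℓ^P + w·L − r_{ℓ'}^1)_i (requiring P ≥ 2 for the first term). -/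
/-!
Only two springs involve the coordinate `(r_ℓ^P)_i`: the interior spring from bead `P - 1` and
the exterior spring to bead `1` of particle `σ ℓ`. Differentiating `-(1/β) log Z` therefore gives
the Boltzmann average, over all sectors `(σ, w)`, of the forces of these two springs; grouping
the sectors by `w ℓ (P - 1)`, respectively by `(σ ℓ, w ℓ P)`, turns that average into the
probability-weighted sums of the statement.
-/

open Finset Real

noncomputable section

/-- Bead `P-1` (zero-indexed `P-2`; meaningful for `P ≥ 2`). -/
def prevIdx (P : ℕ) [NeZero P] : Fin P :=
  ⟨P - 2, Nat.sub_lt (Nat.pos_of_ne_zero (NeZero.ne P)) Nat.two_pos⟩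

/-- Bosonic configuration sum `Z(r) = (1/N!) ∑_σ ∑_w exp(-βE^{σ,w}(r))`. -/
def Zb (N P d W : ℕ) [NeZero P] (β c L : ℝ) (r : Fin N → Fin P → Fin d → ℝ) : ℝ :=
  (1 / (Nat.factorial N : ℝ)) *
    ∑ σ : Equiv.Perm (Fin N), ∑ w ∈ WAll N P d W, Real.exp (-(β * Eperm N P d c L r σ w))

/-- Bosonic ring-polymer potential with PBC: `V(r) = -(1/β) log Z(r)`. -/
def Vb (N P d W : ℕ) [NeZero P] (β c L : ℝ) (r : Fin N → Fin P → Fin d → ℝ) : ℝ :=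
  -(1 / β) * Real.log (Zb N P d W β c L r)

/-- Replace the `i`-th coordinate of bead `j` of particle `ℓ` by `t`. -/
def updR {N P d : ℕ} (r : Fin N → Fin P → Fin d → ℝ) (ℓ : Fin N) (j : Fin P) (i : Fin d)
    (t : ℝ) : Fin N → Fin P → Fin d → ℝ :=
  Function.update r ℓ (Function.update (r ℓ) j (Function.update (r ℓ j) i t))

namespace Finset

variable {α ι κ μ M R : Type*} [AddCommMonoid M] [NonUnitalNonAssocSemiring R]

lemma sum_comp_eq_sum_fiberwise [DecidableEq κ] {s : Finset ι} {t : Finset κ} {g : ι → κ}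
    (hg : ∀ i ∈ s, g i ∈ t) (f : ι → κ → M) :
    ∑ i ∈ s, f i (g i) = ∑ j ∈ t, ∑ i ∈ s with g i = j, f i j := by
  rw [← sum_fiberwise_of_maps_to hg]
  exact sum_congr rfl fun j _ => sum_congr rfl fun i hi => by rw [(mem_filter.1 hi).2]

lemma sum_mul_comp_eq_sum_fiberwise [DecidableEq κ] {s : Finset ι} {t : Finset κ} {g : ι → κ}
    (hg : ∀ i ∈ s, g i ∈ t) (F : ι → R) (h : κ → R) :
    ∑ i ∈ s, F i * h (g i) = ∑ j ∈ t, (∑ i ∈ s with g i = j, F i) * h j := by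
  simp_rw [sum_comp_eq_sum_fiberwise hg (fun i j => F i * h j), sum_mul]

lemma sum_sum_mul_comp_eq_sum_fiberwise [DecidableEq κ] {s : Finset α} {s' : Finset ι}
    {t : Finset κ} {g : ι → κ} (hg : ∀ i ∈ s', g i ∈ t) (F : α → ι → R) (h : κ → R) :
    ∑ a ∈ s, ∑ i ∈ s', F a i * h (g i) =
      ∑ j ∈ t, (∑ a ∈ s, ∑ i ∈ s' with g i = j, F a i) * h j := by
  simp_rw [sum_mul_comp_eq_sum_fiberwise hg, sum_mul]
  exact sum_comm

lemma sum_sum_mul_comp₂_eq_sum_fiberwise [DecidableEq μ] [DecidableEq κ] {s : Finset α}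
    {s' : Finset ι} {u : Finset μ} {t : Finset κ} {f : α → μ} {g : ι → κ}
    (hf : ∀ a ∈ s, f a ∈ u) (hg : ∀ i ∈ s', g i ∈ t) (F : α → ι → R) (H : μ → κ → R) :
    ∑ a ∈ s, ∑ i ∈ s', F a i * H (f a) (g i) =
      ∑ k ∈ u, ∑ j ∈ t, (∑ a ∈ s with f a = k, ∑ i ∈ s' with g i = j, F a i) * H k j := by
  simp_rw [sum_mul_comp_eq_sum_fiberwise hg]
  rw [sum_comp_eq_sum_fiberwise hf (fun a k => ∑ j ∈ t, (∑ i ∈ s' with g i = j, F a i) * H k j)]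
  refine sum_congr rfl fun k _ => ?_
  rw [sum_comm]
  simp_rw [sum_mul]

lemma sum_sum_sum_ite_and_eq [Fintype α] [Fintype ι] [Fintype κ] [DecidableEq α]
    [DecidableEq ι] [DecidableEq κ] (g : α → ι → κ → M) (a : α) (i : ι) (k : κ) :
    ∑ x, ∑ y, ∑ z, (if x = a ∧ y = i ∧ z = k then g x y z else 0) = g a i k := by
  simp [ite_and]

end Finset

lemma hasDerivAt_ite_id (p : Prop) [Decidable p] (a x : ℝ) :
    HasDerivAt (fun t => if p then t else a) (if p then 1 else 0) x := by
  split_ifs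
  exacts [hasDerivAt_id x, hasDerivAt_const x a]

section Beads

variable {N P d : ℕ}

lemma updR_apply (r : Fin N → Fin P → Fin d → ℝ) (ℓ : Fin N) (j : Fin P) (i : Fin d) (t : ℝ)
    (ℓ' : Fin N) (j' : Fin P) (i' : Fin d) :
    updR r ℓ j i t ℓ' j' i' = if ℓ' = ℓ ∧ j' = j ∧ i' = i then t else r ℓ' j' i' := by
  by_cases hℓ : ℓ' = ℓ <;> by_cases hj : j' = j <;> by_cases hi : i' = i <;>
    simp [updR, hℓ, hj, hi]

lemma updR_self (r : Fin N → Fin P → Fin d → ℝ) (ℓ : Fin N) (j : Fin P) (i : Fin d) :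
    updR r ℓ j i (r ℓ j i) = r := by
  simp [updR]

variable [NeZero P]

lemma lastIdx_val : (lastIdx P).val = P - 1 := rfl

lemma prevIdx_val : (prevIdx P).val = P - 2 := rfl

def nextBead (r : Fin N → Fin P → Fin d → ℝ) (σ : Equiv.Perm (Fin N)) (ℓ : Fin N) (j : Fin P)
    (i : Fin d) : ℝ :=
  if h : j.val + 1 < P then r ℓ ⟨j.val + 1, h⟩ i else r (σ ℓ) 0 i

lemma nextBead_lastIdx (r : Fin N → Fin P → Fin d → ℝ) (σ : Equiv.Perm (Fin N)) (ℓ : Fin N)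
    (i : Fin d) : nextBead r σ ℓ (lastIdx P) i = r (σ ℓ) 0 i :=
  dif_neg (by rw [lastIdx_val]; omega)

lemma nextBead_prevIdx (hP : 2 ≤ P) (r : Fin N → Fin P → Fin d → ℝ) (σ : Equiv.Perm (Fin N))
    (ℓ : Fin N) (i : Fin d) : nextBead r σ ℓ (prevIdx P) i = r ℓ (lastIdx P) i := by
  rw [nextBead, dif_pos (by rw [prevIdx_val]; omega)]
  congr 1
  ext
  simp only [prevIdx_val, lastIdx_val]
  omega

lemma nextBead_updR_lastIdx (hP : 2 ≤ P) (r : Fin N → Fin P → Fin d → ℝ)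
    (σ : Equiv.Perm (Fin N)) (ℓ ℓ' : Fin N) (j : Fin P) (i i' : Fin d) (t : ℝ) :
    nextBead (updR r ℓ (lastIdx P) i t) σ ℓ' j i' =
      if ℓ' = ℓ ∧ j = prevIdx P ∧ i' = i then t else nextBead r σ ℓ' j i' := by
  unfold nextBead
  split_ifs with hj hcond hcond
  all_goals simp only [updR_apply, Fin.ext_iff, lastIdx_val, prevIdx_val, Fin.val_zero] at *
  all_goals grind

lemma hasDerivAt_spring_sq (hP : 2 ≤ P) (L : ℝ) (r : Fin N → Fin P → Fin d → ℝ)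
    (σ : Equiv.Perm (Fin N)) (w : Fin N → Fin P → Fin d → ℤ) (ℓ ℓ' : Fin N) (j : Fin P)
    (i i' : Fin d) :
    HasDerivAt
      (fun t => (updR r ℓ (lastIdx P) i t ℓ' j i' + (w ℓ' j i' : ℝ) * L -
        nextBead (updR r ℓ (lastIdx P) i t) σ ℓ' j i') ^ 2)
      (2 * (r ℓ' j i' + (w ℓ' j i' : ℝ) * L - nextBead r σ ℓ' j i') *
        ((if ℓ' = ℓ ∧ j = lastIdx P ∧ i' = i then 1 else 0) -
          (if ℓ' = ℓ ∧ j = prevIdx P ∧ i' = i then 1 else 0)))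
      (r ℓ (lastIdx P) i) := by
  simp_rw [updR_apply, nextBead_updR_lastIdx hP]
  refine ((((hasDerivAt_ite_id _ _ _).add_const _).sub (hasDerivAt_ite_id _ _ _)).pow 2
    ).congr_deriv ?_
  have := nextBead_prevIdx hP r σ ℓ i
  split_ifs <;> simp_all

lemma hasDerivAt_Eperm_lastIdx (hP : 2 ≤ P) (c L : ℝ) (r : Fin N → Fin P → Fin d → ℝ)
    (σ : Equiv.Perm (Fin N)) (w : Fin N → Fin P → Fin d → ℤ) (ℓ : Fin N) (i : Fin d) :
    HasDerivAt (fun t => Eperm N P d c L (updR r ℓ (lastIdx P) i t) σ w)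
      (2 * c * ((r ℓ (lastIdx P) i + (w ℓ (lastIdx P) i : ℝ) * L - r (σ ℓ) 0 i) -
        (r ℓ (prevIdx P) i + (w ℓ (prevIdx P) i : ℝ) * L - r ℓ (lastIdx P) i)))
      (r ℓ (lastIdx P) i) := by
  have hsum := HasDerivAt.fun_sum (u := univ) fun ℓ' _ => HasDerivAt.fun_sum (u := univ)
    fun j _ => HasDerivAt.fun_sum (u := univ) fun i' _ =>
      hasDerivAt_spring_sq hP L r σ w ℓ ℓ' j i i'
  -- `Eperm` unfolds to `c` times this triple sum
  refine (hsum.const_mul c).congr_deriv ?_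
  simp only [mul_sub, mul_ite, mul_one, mul_zero, sum_sub_distrib, sum_sum_sum_ite_and_eq,
    nextBead_lastIdx, nextBead_prevIdx hP]
  ring

end Beads

section Partition

variable {N P d W : ℕ}

lemma mem_windowSet_of_mem_WAll {w : Fin N → Fin P → Fin d → ℤ} (hw : w ∈ WAll N P d W)
    (ℓ : Fin N) (j : Fin P) : w ℓ j ∈ windowSet d W :=
  Fintype.mem_piFinset.mp (Fintype.mem_piFinset.mp hw ℓ) j

lemma zero_mem_WAll : 0 ∈ WAll N P d W := by
  simp [WAll, windowSet]

lemma Zb_pos [NeZero P] (β c L : ℝ) (r : Fin N → Fin P → Fin d → ℝ) :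
    0 < Zb N P d W β c L r :=
  mul_pos (by positivity) (sum_pos (fun σ _ => sum_pos (fun w _ => exp_pos _)
    ⟨0, zero_mem_WAll⟩) univ_nonempty)

lemma hasDerivAt_Vb_comp [NeZero P] {β c L : ℝ} (hβ : β ≠ 0)
    {γ : ℝ → Fin N → Fin P → Fin d → ℝ} {x : ℝ} {r : Fin N → Fin P → Fin d → ℝ} (hγ : γ x = r)
    {E' : Equiv.Perm (Fin N) → (Fin N → Fin P → Fin d → ℤ) → ℝ}
    (hE : ∀ σ w, HasDerivAt (fun t => Eperm N P d c L (γ t) σ w) (E' σ w) x) :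
    HasDerivAt (fun t => Vb N P d W β c L (γ t))
      (∑ σ, ∑ w ∈ WAll N P d W, exp (-(β * Eperm N P d c L r σ w)) /
        ((Nat.factorial N : ℝ) * Zb N P d W β c L r) * E' σ w) x := by
  have hZ : HasDerivAt (fun t => Zb N P d W β c L (γ t))
      (1 / (Nat.factorial N : ℝ) * ∑ σ, ∑ w ∈ WAll N P d W,
        exp (-(β * Eperm N P d c L r σ w)) * -(β * E' σ w)) x := by
    refine HasDerivAt.const_mul _ (HasDerivAt.fun_sum fun σ _ => HasDerivAt.fun_sum fun w _ => ?_)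
    simpa [hγ] using ((hE σ w).const_mul β).neg.exp
  have hZr : Zb N P d W β c L (γ x) = Zb N P d W β c L r := by rw [hγ]
  have hV := (hZ.log (hZr ▸ (Zb_pos β c L r).ne')).const_mul (-(1 / β))
  refine hV.congr_deriv ?_
  have hZ0 := (Zb_pos (W := W) β c L r).ne'
  simp only [hZr, mul_sum, sum_div]
  refine sum_congr rfl fun σ _ => sum_congr rfl fun w _ => ?_
  field_simp

end Partition

theorem stmt13_general (N P d W : ℕ) [NeZero P] (hP : 2 ≤ P)
    (β L c : ℝ) (hβ : 0 < β)
    (r : Fin N → Fin P → Fin d → ℝ) (ℓ : Fin N) (i : Fin d) :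
    HasDerivAt (fun t => Vb N P d W β c L (updR r ℓ (lastIdx P) i t))
      (-((∑ w ∈ windowSet d W,
            ((∑ σ : Equiv.Perm (Fin N),
                ∑ w' ∈ (WAll N P d W).filter (fun w' => w' ℓ (prevIdx P) = w),
                  Real.exp (-(β * Eperm N P d c L r σ w'))) /
                ((Nat.factorial N : ℝ) * Zb N P d W β c L r)) *
              ((-2 * c) * (r ℓ (lastIdx P) i - r ℓ (prevIdx P) i - (w i : ℝ) * L))) +
          ∑ ℓ' : Fin N, ∑ w ∈ windowSet d W,
            ((∑ σ ∈ Finset.univ.filter (fun σ : Equiv.Perm (Fin N) => σ ℓ = ℓ'),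
                ∑ w' ∈ (WAll N P d W).filter (fun w' => w' ℓ (lastIdx P) = w),
                  Real.exp (-(β * Eperm N P d c L r σ w'))) /
                ((Nat.factorial N : ℝ) * Zb N P d W β c L r)) *
              ((-2 * c) * (r ℓ (lastIdx P) i + (w i : ℝ) * L - r ℓ' 0 i))))
      (r ℓ (lastIdx P) i) := by
  refine (hasDerivAt_Vb_comp hβ.ne' (updR_self r ℓ (lastIdx P) i)
    fun σ w => hasDerivAt_Eperm_lastIdx hP c L r σ w ℓ i).congr_deriv ?_
  set F := fun σ w => exp (-(β * Eperm N P d c L r σ w)) /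
    ((Nat.factorial N : ℝ) * Zb N P d W β c L r)
  calc _ = -(∑ σ, ∑ w ∈ WAll N P d W, F σ w *
          ((-2 * c) * (r ℓ (lastIdx P) i - r ℓ (prevIdx P) i - (w ℓ (prevIdx P) i : ℝ) * L)) +
        ∑ σ, ∑ w ∈ WAll N P d W, F σ w *
          ((-2 * c) * (r ℓ (lastIdx P) i + (w ℓ (lastIdx P) i : ℝ) * L - r (σ ℓ) 0 i))) := by
        simp only [← sum_add_distrib, ← sum_neg_distrib]
        refine sum_congr rfl fun σ _ => sum_congr rfl fun w _ => ?_
        ring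
    _ = _ := by
        rw [sum_sum_mul_comp_eq_sum_fiberwise (fun w hw => mem_windowSet_of_mem_WAll hw ℓ _)
          F fun v => (-2 * c) * (r ℓ (lastIdx P) i - r ℓ (prevIdx P) i - (v i : ℝ) * L),
          sum_sum_mul_comp₂_eq_sum_fiberwise (fun σ _ => mem_univ (σ ℓ))
          (fun w hw => mem_windowSet_of_mem_WAll hw ℓ _) F
          fun ℓ' v => (-2 * c) * (r ℓ (lastIdx P) i + (v i : ℝ) * L - r ℓ' 0 i)]
        simp only [F, sum_div]

/-- grouped force on the last bead of a particle in bosonic PIMD with PBC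
(`P ≥ 2`). Minus the partial derivative of `V` w.r.t. `(r_ℓ^P)_i` equals the contribution
of the interior spring from bead `P-1`, weighted by the marginal winding probability, plus
the contributions of the exterior spring, weighted by the joint connectivity–winding
probabilities. -/
theorem stmt13 (N P d W : ℕ) [NeZero N] [NeZero P] (hP : 2 ≤ P) (hd : 0 < d)
    (β L c : ℝ) (hβ : 0 < β) (hL : 0 < L) (hc : 0 < c)
    (r : Fin N → Fin P → Fin d → ℝ) (ℓ : Fin N) (i : Fin d) :
    HasDerivAt (fun t => Vb N P d W β c L (updR r ℓ (lastIdx P) i t))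
      (-((∑ w ∈ windowSet d W,
            ((∑ σ : Equiv.Perm (Fin N),
                ∑ w' ∈ (WAll N P d W).filter (fun w' => w' ℓ (prevIdx P) = w),
                  Real.exp (-(β * Eperm N P d c L r σ w'))) /
                ((Nat.factorial N : ℝ) * Zb N P d W β c L r)) *
              ((-2 * c) * (r ℓ (lastIdx P) i - r ℓ (prevIdx P) i - (w i : ℝ) * L))) +
          ∑ ℓ' : Fin N, ∑ w ∈ windowSet d W,
            ((∑ σ ∈ Finset.univ.filter (fun σ : Equiv.Perm (Fin N) => σ ℓ = ℓ'),
                ∑ w' ∈ (WAll N P d W).filter (fun w' => w' ℓ (lastIdx P) = w),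
                  Real.exp (-(β * Eperm N P d c L r σ w'))) /
                ((Nat.factorial N : ℝ) * Zb N P d W β c L r)) *
              ((-2 * c) * (r ℓ (lastIdx P) i + (w i : ℝ) * L - r ℓ' 0 i))))
      (r ℓ (lastIdx P) i) :=
  stmt13_general N P d W hP β L c hβ r ℓ i

end
end
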